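/- arXiv:0708.1768 — 2 statements merged into one kernel-verified Lean document; each statement's English description precedes it below -/
import Mathlib

section
/- Shifted conjugacy is left self-distributive: for all u, v, w in B_∞, u*(v*w) = (u*v)*(u*w), where a*b = a · d(b) · σ₁ · d(a⁻¹). -/
/-- Braid relations for the infinite braid group: generator `i : ℕ` represents σ_{i+1}. -/
def braidRelsInf : Set (FreeGroup ℕ) :=
  {r | ∃ i j : ℕ,
    (j = i + 1 ∧ r = FreeGroup.of i * FreeGroup.of j * FreeGroup.of i *
        (FreeGroup.of j * FreeGroup.of i * FreeGroup.of j)⁻¹) ∨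
    (i + 2 ≤ j ∧ r = FreeGroup.of i * FreeGroup.of j * (FreeGroup.of j * FreeGroup.of i)⁻¹)}

/-- The braid group B_∞ on infinitely many strands. -/
abbrev BInf : Type := PresentedGroup braidRelsInf

/-- `sigmaInf i` is the Artin generator σ_{i+1} of `BInf` (0-indexed). -/
def sigmaInf (i : ℕ) : BInf := PresentedGroup.of i

/-- Braid relations on `n` generators: `B n` below is the braid group B_{n+1} on
n+1 strands; the generator `i : Fin n` represents σ_{i+1}. -/
def braidRels (n : ℕ) : Set (FreeGroup (Fin n)) :=
  {r | ∃ i j : Fin n,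
    ((j : ℕ) = (i : ℕ) + 1 ∧ r = FreeGroup.of i * FreeGroup.of j * FreeGroup.of i *
        (FreeGroup.of j * FreeGroup.of i * FreeGroup.of j)⁻¹) ∨
    ((i : ℕ) + 2 ≤ (j : ℕ) ∧ r = FreeGroup.of i * FreeGroup.of j *
        (FreeGroup.of j * FreeGroup.of i)⁻¹)}

/-- `B n` is the braid group on n+1 strands (the paper's B_{n+1}), with n generators. -/
abbrev B (n : ℕ) : Type := PresentedGroup (braidRels n)

/-- `σ i` for `i : Fin n` is the Artin generator σ_{i+1} of `B n` (0-indexed). -/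
def σ {n : ℕ} (i : Fin n) : B n := PresentedGroup.of i

/-- `delta n = σ_n ⋯ σ_1` (the paper's δ_{n+1} when `B n` is the paper's B_{n+1}). -/
def delta (n : ℕ) : B n := ((List.ofFn (fun i : Fin n => σ i)).reverse).prod

/-- `Delta n = (σ_n ⋯ σ_1)(σ_n ⋯ σ_2) ⋯ (σ_n)`, the paper's Δ_{n+1}. -/
def Delta (n : ℕ) : B n :=
  (List.ofFn (fun k : Fin n =>
    (((List.ofFn (fun i : Fin n => σ i)).reverse).take (n - (k : ℕ))).prod)).prod



/-- Shifted conjugacy: `a*b = a · d(b) · σ₁ · d(a)⁻¹` (σ₁ is `sigmaInf 0`). -/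
def sstar (d : BInf →* BInf) (a b : BInf) : BInf := a * d b * sigmaInf 0 * (d a)⁻¹

lemma rel_one {r : FreeGroup ℕ} (hr : r ∈ braidRelsInf) : PresentedGroup.mk braidRelsInf r = 1 :=
  (QuotientGroup.eq_one_iff r).2 (Subgroup.subset_normalClosure hr)

lemma braid_adj : sigmaInf 0 * sigmaInf 1 * sigmaInf 0 = sigmaInf 1 * sigmaInf 0 * sigmaInf 1 := by
  have h := rel_one ⟨0, 1, Or.inl ⟨rfl, rfl⟩⟩
  rw [map_mul, map_inv, mul_inv_eq_one] at h
  simpa [sigmaInf, PresentedGroup.of, map_mul] using h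

lemma braid_comm {j : ℕ} (hj : 2 ≤ j) : Commute (sigmaInf 0) (sigmaInf j) := by
  have h := rel_one ⟨0, j, Or.inr ⟨hj, rfl⟩⟩
  rw [map_mul, map_inv, mul_inv_eq_one] at h
  simpa [Commute, SemiconjBy, sigmaInf, PresentedGroup.of, map_mul] using h

lemma comm_dd (d : BInf →* BInf) (hd : ∀ i : ℕ, d (sigmaInf i) = sigmaInf (i + 1))
    (x : BInf) : Commute (sigmaInf 0) (d (d x)) := by
  have : x ∈ Subgroup.comap (d.comp d) (Subgroup.centralizer {sigmaInf 0}) := by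
    refine PresentedGroup.generated_by _ _ (fun j => ?_) x
    simp only [Subgroup.mem_comap, MonoidHom.comp_apply]
    rw [show (PresentedGroup.of j : BInf) = sigmaInf j from rfl, hd, hd]
    exact Subgroup.mem_centralizer_singleton_iff.mpr (braid_comm (by omega)).symm.eq
  exact (Subgroup.mem_centralizer_singleton_iff.mp this).symm

/-- shifted conjugacy is left self-distributive. -/
theorem shifted_conjugacy_self_distributive (d : BInf →* BInf)
    (hd : ∀ i : ℕ, d (sigmaInf i) = sigmaInf (i + 1)) :
    ∀ u v w : BInf, sstar d u (sstar d v w) = sstar d (sstar d u v) (sstar d u w) := by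
  intro u v w
  have hu := comm_dd d hd u
  have hv := comm_dd d hd v
  have hw := comm_dd d hd w
  have key : sigmaInf 1 * sigmaInf 0 * (sigmaInf 1)⁻¹ = (sigmaInf 0)⁻¹ * (sigmaInf 1 * sigmaInf 0) := by
    apply mul_left_cancel (a := sigmaInf 0)
    rw [mul_inv_cancel_left, ← mul_assoc, ← mul_assoc, braid_adj, mul_assoc, mul_inv_cancel,
      mul_one]
  have h1 : ∀ x : BInf, (d (d u))⁻¹ * (sigmaInf 0 * (d (d u) * x)) = sigmaInf 0 * x := fun x => by
    rw [← mul_assoc (sigmaInf 0), hu.eq, mul_assoc, inv_mul_cancel_left]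
  have h2 : ∀ x : BInf, sigmaInf 1 * (sigmaInf 0 * ((sigmaInf 1)⁻¹ * x)) =
      (sigmaInf 0)⁻¹ * (sigmaInf 1 * (sigmaInf 0 * x)) := fun x => by
    rw [← mul_assoc, ← mul_assoc, key, mul_assoc, mul_assoc]
  have h3 : ∀ x : BInf, sigmaInf 0 * (d (d w) * ((sigmaInf 0)⁻¹ * x)) = d (d w) * x := fun x => by
    rw [← mul_assoc, hw.eq, mul_assoc, mul_inv_cancel_left]
  have h4 : ∀ x : BInf, sigmaInf 0 * ((d (d v))⁻¹ * x) = (d (d v))⁻¹ * (sigmaInf 0 * x) :=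
    fun x => by rw [← mul_assoc, hv.inv_right.eq, mul_assoc]
  simp only [sstar, map_mul, map_inv, hd 0, mul_inv_rev, inv_inv, mul_assoc]
  rw [inv_mul_cancel_left, h1, h2, h3, h4]
end

section
/- For p ∈ B_n, each of the elements c₁ = Δ_{n+1}², c₂ = d(p) σ₂⁻¹ ⋯ σ_n⁻¹, and c₃ = σ₁ ⋯ σ_{n−1} σ_n² σ_{n−1} ⋯ σ₁ lies in the centralizer of d(p) σ₁ δ_{n+1}⁻¹ in B_{n+1}. -/
namespace Braid

/-- `σ_{i+1}` for `i < n`, and `1` otherwise, so that far commutation needs no bound on `n`. -/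
def gen (n i : ℕ) : B n := if h : i < n then σ ⟨i, h⟩ else 1

theorem gen_braid {n i : ℕ} (h : i + 1 < n) :
    gen n i * gen n (i + 1) * gen n i = gen n (i + 1) * gen n i * gen n (i + 1) := by
  have hi : i < n := by omega
  simp only [gen, dif_pos hi, dif_pos h, σ]
  have := PresentedGroup.mk_eq_mk_of_mul_inv_mem (rels := braidRels n)
    ⟨⟨i, hi⟩, ⟨i + 1, h⟩, Or.inl ⟨rfl, rfl⟩⟩
  simp only [map_mul] at this
  exact this

theorem gen_commute {n i j : ℕ} (h : i + 2 ≤ j) : Commute (gen n i) (gen n j) := by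
  by_cases hj : j < n
  · have hi : i < n := by omega
    simp only [Commute, SemiconjBy, gen, dif_pos hi, dif_pos hj, σ]
    have := PresentedGroup.mk_eq_mk_of_mul_inv_mem (rels := braidRels n)
      ⟨⟨i, hi⟩, ⟨j, hj⟩, Or.inr ⟨h, rfl⟩⟩
    simp only [map_mul] at this
    exact this
  · simp only [gen, dif_neg hj]
    exact Commute.one_right _

/-- `σ_{a+1} σ_{a+2} ⋯ σ_{a+l}` -/
def asc (n a l : ℕ) : B n := ((List.range' a l).map (gen n)).prod

/-- `σ_{a+l} ⋯ σ_{a+2} σ_{a+1}` -/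
def desc (n a l : ℕ) : B n := ((List.range' a l).map (gen n)).reverse.prod

variable {n : ℕ}

theorem σ_eq_gen (i : Fin n) : σ i = gen n i := by
  simp [gen]

@[simp] theorem asc_zero (a : ℕ) : asc n a 0 = 1 := rfl

@[simp] theorem desc_zero (a : ℕ) : desc n a 0 = 1 := rfl

theorem asc_succ (a l : ℕ) : asc n a (l + 1) = gen n a * asc n (a + 1) l := by
  simp [asc, List.range'_succ]

theorem asc_succ' (a l : ℕ) : asc n a (l + 1) = asc n a l * gen n (a + l) := by
  simp [asc, List.range'_concat]

theorem desc_succ (a l : ℕ) : desc n a (l + 1) = desc n (a + 1) l * gen n a := by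
  simp [desc, List.range'_succ]

theorem desc_succ' (a l : ℕ) : desc n a (l + 1) = gen n (a + l) * desc n a l := by
  simp [desc, List.range'_concat]

theorem commute_asc {x : B n} {a l : ℕ} (h : ∀ k < l, Commute x (gen n (a + k))) :
    Commute x (asc n a l) := by
  refine Commute.list_prod_right _ _ fun y hy => ?_
  obtain ⟨i, hi, rfl⟩ := List.mem_map.mp hy
  obtain ⟨hai, hil⟩ := List.mem_range'_1.mp hi
  simpa [Nat.add_sub_cancel' hai] using h (i - a) (by omega)

theorem commute_desc {x : B n} {a l : ℕ} (h : ∀ k < l, Commute x (gen n (a + k))) :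
    Commute x (desc n a l) := by
  refine Commute.list_prod_right _ _ fun y hy => ?_
  obtain ⟨i, hi, rfl⟩ := List.mem_map.mp (List.mem_reverse.mp hy)
  obtain ⟨hai, hil⟩ := List.mem_range'_1.mp hi
  simpa [Nat.add_sub_cancel' hai] using h (i - a) (by omega)

theorem commute_gen_asc_of_add_two_le {a l j : ℕ} (h : j + 2 ≤ a) :
    Commute (gen n j) (asc n a l) :=
  commute_asc fun _ _ => gen_commute (by omega)

theorem commute_gen_asc_of_add_lt {a l j : ℕ} (h : a + l < j) :
    Commute (gen n j) (asc n a l) :=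
  commute_asc fun _ _ => (gen_commute (by omega)).symm

theorem commute_gen_desc_of_add_lt {a l j : ℕ} (h : a + l < j) :
    Commute (gen n j) (desc n a l) :=
  commute_desc fun _ _ => (gen_commute (by omega)).symm

theorem gen_mul_desc {a l j : ℕ} (haj : a ≤ j) (hjl : j + 2 ≤ a + l) (hn : a + l ≤ n) :
    gen n j * desc n a l = desc n a l * gen n (j + 1) := by
  induction l with
  | zero => omega
  | succ l ih =>
    rw [desc_succ']
    by_cases hlt : j + 2 ≤ a + l
    · rw [← mul_assoc, (gen_commute hlt).eq, mul_assoc, ih hlt (by omega), mul_assoc]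
    · obtain ⟨l, rfl⟩ : ∃ l', l = l' + 1 := ⟨l - 1, by omega⟩
      obtain rfl : j = a + l := by omega
      have hc : Commute (gen n (a + l + 1)) (desc n a l) := commute_gen_desc_of_add_lt (by omega)
      calc gen n (a + l) * (gen n (a + (l + 1)) * desc n a (l + 1))
          = gen n (a + l) * gen n (a + l + 1) * gen n (a + l) * desc n a l := by
            rw [desc_succ']; simp only [mul_assoc]; rfl
        _ = gen n (a + l + 1) * gen n (a + l) * (gen n (a + l + 1) * desc n a l) := by
            rw [gen_braid (by omega), mul_assoc]
        _ = gen n (a + (l + 1)) * desc n a (l + 1) * gen n (a + l + 1) := by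
            rw [hc.eq, desc_succ']; simp only [mul_assoc]; rfl

theorem asc_mul_gen {a l j : ℕ} (haj : a ≤ j) (hjl : j + 2 ≤ a + l) (hn : a + l ≤ n) :
    asc n a l * gen n j = gen n (j + 1) * asc n a l := by
  induction l generalizing a with
  | zero => omega
  | succ l ih =>
    rw [asc_succ]
    by_cases haj' : a < j
    · rw [mul_assoc, ih (by omega) (by omega) (by omega), ← mul_assoc,
        (gen_commute (by omega)).eq, mul_assoc]
    · obtain ⟨l, rfl⟩ : ∃ l', l = l' + 1 := ⟨l - 1, by omega⟩
      obtain rfl : a = j := by omega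
      have hc : Commute (gen n a) (asc n (a + 2) l) := commute_gen_asc_of_add_two_le le_rfl
      calc gen n a * asc n (a + 1) (l + 1) * gen n a
          = gen n a * gen n (a + 1) * gen n a * asc n (a + 2) l := by
            rw [asc_succ]
            simp only [mul_assoc]
            rw [← hc.eq]
        _ = gen n (a + 1) * (gen n a * asc n (a + 1) (l + 1)) := by
            rw [gen_braid (by omega), asc_succ]; simp only [mul_assoc]

theorem desc_succ_mul_asc {a l : ℕ} (hn : a + l + 1 ≤ n) :
    desc n a (l + 1) * asc n (a + 1) l = asc n a (l + 1) * desc n a l := by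
  induction l with
  | zero => simp [desc_succ, asc_succ]
  | succ l ih =>
    have hd : Commute (gen n (a + l + 1)) (desc n a l) := commute_gen_desc_of_add_lt (by omega)
    have ha : Commute (gen n (a + l + 1)) (asc n a l) := commute_gen_asc_of_add_lt (by omega)
    calc desc n a (l + 2) * asc n (a + 1) (l + 1)
        = gen n (a + l + 1) * (desc n a (l + 1) * asc n (a + 1) l) * gen n (a + l + 1) := by
          rw [desc_succ' a (l + 1), asc_succ' (a + 1) l, show a + 1 + l = a + l + 1 by omega]
          simp only [mul_assoc]; rfl
      _ = asc n a l * (gen n (a + l + 1) * gen n (a + l) * gen n (a + l + 1)) * desc n a l := by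
          rw [ih (by omega), asc_succ']
          simp only [mul_assoc]
          rw [← hd.eq, ← mul_assoc, ha.eq]
          simp only [mul_assoc]
      _ = asc n a (l + 2) * desc n a (l + 1) := by
          rw [← gen_braid (by omega), asc_succ', asc_succ', desc_succ']
          simp only [mul_assoc]; rfl

variable (n) in
/-- The Garside element `Δ` of the generators `σ_{a+1}, …, σ_{a+l}`. -/
def garside : ℕ → ℕ → B n
  | _, 0 => 1
  | a, l + 1 => desc n a (l + 1) * garside (a + 1) l

theorem garside_succ' {a l : ℕ} (hn : a + l + 1 ≤ n) :
    garside n a (l + 1) = asc n a (l + 1) * garside n a l := by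
  induction l generalizing a with
  | zero => simp [garside, desc_succ, asc_succ]
  | succ l ih =>
    rw [garside, ih (by omega), ← mul_assoc, desc_succ_mul_asc (by omega), mul_assoc, ← garside]

theorem gen_mul_garside {a l i : ℕ} (hai : a ≤ i) (hil : i < a + l) (hn : a + l ≤ n) :
    gen n i * garside n a l = garside n a l * gen n (2 * a + l - 1 - i) := by
  induction l generalizing a i with
  | zero => omega
  | succ l ih =>
    by_cases hi : i < a + l
    · rw [garside, ← mul_assoc, gen_mul_desc hai (by omega) hn, mul_assoc,
        ih (by omega) (by omega) (by omega), ← mul_assoc]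
      congr 2
      omega
    · obtain rfl : i = a + l := by omega
      cases l with
      | zero => simp [garside, desc_succ, two_mul]
      | succ l =>
        have hslide : gen n (a + (l + 1)) * asc n a (l + 2) = asc n a (l + 2) * gen n (a + l) :=
          (asc_mul_gen (j := a + l) (by omega) (by omega) hn).symm
        rw [garside_succ' hn, ← mul_assoc, hslide, mul_assoc,
          ih (by omega) (by omega) (by omega), ← mul_assoc]
        congr 2
        omega

theorem commute_map_of_forall_σ {G : Type*} [Group G] (f : B n →* G) {x : G}
    (h : ∀ i, Commute (f (σ i)) x) (p : B n) : Commute (f p) x := by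
  have hmem := PresentedGroup.generated_by (braidRels n) ((Subgroup.centralizer {x}).comap f)
    (fun i => Subgroup.mem_centralizer_singleton_iff.mpr (h i).eq) p
  exact Subgroup.mem_centralizer_singleton_iff.mp hmem

theorem commute_garside_sq (p : B n) : Commute p (garside n 0 n ^ 2) := by
  refine commute_map_of_forall_σ (MonoidHom.id (B n)) (fun i => ?_) p
  have hi := i.isLt
  have h₁ : gen n i * garside n 0 n = garside n 0 n * gen n (n - 1 - i) := by
    simpa using gen_mul_garside (n := n) (a := 0) (l := n) (i := i) (by omega) (by omega) (by omega)
  have h₂ : gen n (n - 1 - i) * garside n 0 n = garside n 0 n * gen n i := by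
    simpa [show n - 1 - (n - 1 - i) = i by omega] using
      gen_mul_garside (n := n) (a := 0) (l := n) (i := n - 1 - i) (by omega) (by omega) (by omega)
  calc σ i * garside n 0 n ^ 2 = gen n i * garside n 0 n * garside n 0 n := by
        rw [σ_eq_gen, sq, mul_assoc]
    _ = garside n 0 n ^ 2 * σ i := by
        rw [h₁, mul_assoc, h₂, ← mul_assoc, sq, σ_eq_gen]

theorem commute_gen_asc_mul_desc {a l i : ℕ} (hai : a < i) (hil : i < a + l) (hn : a + l ≤ n) :
    Commute (gen n i) (asc n a l * desc n a l) := by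
  obtain ⟨j, rfl⟩ : ∃ j, i = j + 1 := ⟨i - 1, by omega⟩
  rw [Commute, SemiconjBy, ← mul_assoc, ← asc_mul_gen (by omega) (by omega) hn, mul_assoc,
    gen_mul_desc (by omega) (by omega) hn, mul_assoc]

theorem ofFn_σ_eq_map_gen (n : ℕ) :
    List.ofFn (fun i : Fin n => σ i) = (List.range' 0 n).map (gen n) := by
  apply List.ext_getElem
  · simp
  · intro i hi _
    simp only [List.length_ofFn] at hi
    simp [gen, hi]

theorem delta_eq_desc (n : ℕ) : delta n = desc n 0 n := by
  rw [delta, ofFn_σ_eq_map_gen, desc]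

theorem prod_take_reverse_map_gen {t : ℕ} (ht : t ≤ n) :
    (((List.range' 0 n).map (gen n)).reverse.take t).prod = desc n (n - t) t := by
  simp [List.take_reverse, ← List.map_drop, List.drop_range', desc, Nat.sub_sub_self ht]

theorem prod_ofFn_desc (a l : ℕ) :
    (List.ofFn fun k : Fin l => desc n (a + k) (l - k)).prod = garside n a l := by
  induction l generalizing a with
  | zero => rfl
  | succ l ih =>
    rw [List.ofFn_succ, List.prod_cons, garside, ← ih (a + 1)]
    simp only [Fin.val_zero, Fin.val_succ, add_zero, Nat.sub_zero]
    congr 3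
    funext k
    congr 1 <;> omega

theorem Delta_eq_garside (n : ℕ) : Delta n = garside n 0 n := by
  rw [Delta, ← prod_ofFn_desc, ofFn_σ_eq_map_gen]
  congr 2
  funext k
  rw [prod_take_reverse_map_gen (by omega)]
  congr 1
  omega

end Braid

open Braid

/-- Proposition 3, first part. With `B (m+1)` the paper's B_{n+1}
(n = m+1), `B m` the paper's B_n and `d` the shift homomorphism: for p ∈ B_n,
each of c₁ = Δ_{n+1}², c₂ = d(p)σ₂⁻¹⋯σ_n⁻¹, c₃ = σ₁⋯σ_{n−1}σ_n²σ_{n−1}⋯σ₁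
lies in the centralizer of d(p)σ₁δ_{n+1}⁻¹ in B_{n+1}. -/
theorem c1_c2_c3_in_centralizer (m : ℕ) (d : B m →* B (m + 1))
    (hd : ∀ i : Fin m, d (σ i) = σ i.succ) (p : B m)
    (c₁ c₂ c₃ : B (m + 1))
    (hc₁ : c₁ = (Delta (m + 1)) ^ 2)
    (hc₂ : c₂ = d p *
        (((List.ofFn (fun i : Fin (m + 1) => σ i)).drop 1).map (fun x => x⁻¹)).prod)
    (hc₃ : c₃ = (List.ofFn (fun i : Fin (m + 1) => σ i)).prod *
        ((List.ofFn (fun i : Fin (m + 1) => σ i)).reverse).prod) :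
    c₁ ∈ Subgroup.centralizer {d p * σ (0 : Fin (m + 1)) * (delta (m + 1))⁻¹} ∧
    c₂ ∈ Subgroup.centralizer {d p * σ (0 : Fin (m + 1)) * (delta (m + 1))⁻¹} ∧
    c₃ ∈ Subgroup.centralizer {d p * σ (0 : Fin (m + 1)) * (delta (m + 1))⁻¹} := by
  have hg : d p * σ 0 * (delta (m + 1))⁻¹ = d p * (desc (m + 1) 1 m)⁻¹ := by
    rw [delta_eq_desc, desc_succ, σ_eq_gen, Fin.val_zero]
    group
  have hc₂' : c₂ = d p * (desc (m + 1) 1 m)⁻¹ := by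
    rw [hc₂, ofFn_σ_eq_map_gen, desc, List.prod_inv_reverse, List.map_reverse,
      List.reverse_reverse, ← List.map_drop, List.drop_range']
    simp
  have hc₃' : c₃ = asc (m + 1) 0 (m + 1) * desc (m + 1) 0 (m + 1) := by
    rw [hc₃, ofFn_σ_eq_map_gen, asc, desc]
  have hd_c₃ : ∀ i : Fin m, Commute (d (σ i)) c₃ := fun i => by
    rw [hd, σ_eq_gen, hc₃']
    exact commute_gen_asc_mul_desc (by simp) (by simp) (by omega)
  have hdesc_c₃ : Commute (desc (m + 1) 1 m) c₃ := by
    refine (commute_desc fun k hk => ?_).symm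
    rw [hc₃']
    exact (commute_gen_asc_mul_desc (a := 0) (l := m + 1) (by omega) (by omega) (by omega)).symm
  simp only [Subgroup.mem_centralizer_singleton_iff, hg]
  refine ⟨?_, ?_, ?_⟩
  · rw [hc₁, Delta_eq_garside]
    exact (commute_garside_sq _).symm.eq
  · rw [hc₂']
  · exact ((commute_map_of_forall_σ d hd_c₃ p).mul_left hdesc_c₃.inv_left).symm.eq
end
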